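/- Homogeneity of higher-order topological recursion: in the abstract higher topological-recursion model with kernels K_k (2 ≤ k ≤ r), for every λ ∈ ℂ^× let ω^λ_{g,n} denote the amplitudes of the rescaled datum (λ·y, B, (λ^{1−k}·K_k)_{2≤k≤r}). Then for all g ≥ 0 and n ≥ 1 one has ω^λ_{g,n} = λ^{2−2g−n} · ω_{g,n}. This is the homogeneity ω_{g,n}(λS) = λ^{2−2g−n}ω_{g,n}(S) for spectral curves with ramification points of arbitrary order, where rescaling y ↦ λy rescales the order-k recursion kernel by λ^{1−k}. -/
import Mathlib


/-!
STATEMENT 7: Homogeneity of higher-order topological recursion.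

Fix `d, r : ℕ` with `r ≥ 2`, `V = ℂ^d`.  Tensors in `(V*)^{⊗ n}` are
represented by their components `(Fin n → Fin d) → ℂ`; the linear kernels
`K_k : (V*)^{⊗ k} → V*` (`2 ≤ k ≤ r`) by components
`K k : Fin d → (Fin k → Fin d) → ℂ`.  The amplitudes `ω_{g,n}` of the datum
`(y, B, (K_k))` are characterized by `ω_{0,1} = y`, `ω_{0,2} = B` and, for
`2g-1+n > 0`, the Bouchard–Eynard recursion
`ω_{g,n+1} = Σ_{k=2}^{r} Σ_π Σ_{(g_b)} Σ_{(J_b)} K_k(⊗_{b∈π} ω_{g_b,|b|+|J_b|})`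
(set partitions `π` of the `k` contracted slots, `Σ_b g_b = g + |π| - k`,
disjoint `J_b` with `⊔_b J_b = {1,…,n}`, factors `ω_{0,1}` excluded).

The theorem: if `ωl` are the amplitudes of the rescaled datum
`(λ·y, B, (λ^{1-k}·K_k)_k)` for `λ ∈ ℂˣ`, then for all `g ≥ 0`, `n ≥ 1`,
`ω^λ_{g,n} = λ^{2-2g-n} ω_{g,n}`.
-/

open scoped BigOperators

namespace TRHigherHomogeneity

/-- Components of a tensor in `(V*)^{⊗ n}`, `V = ℂ^d`. -/
abbrev Tens (d n : ℕ) := (Fin n → Fin d) → ℂ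

/-- `P` is a set partition of `Fin k`: its blocks are nonempty, pairwise
disjoint, and cover `Fin k` (each element lies in a unique block). -/
def IsSetPartition {k : ℕ} (P : Finset (Finset (Fin k))) : Prop :=
  ∅ ∉ P ∧ ∀ x : Fin k, ∃! b, b ∈ P ∧ x ∈ b

instance {k : ℕ} (P : Finset (Finset (Fin k))) : Decidable (IsSetPartition P) := by
  unfold IsSetPartition ExistsUnique; infer_instance

/-- The right-hand side of the Bouchard–Eynard recursion defining `ω_{g,n+1}`:
`Σ_{k=2}^{r} Σ_π Σ_{(g_b)} Σ_{(J_b)} K_k( ⊗_{b∈π} ω_{g_b, |b|+|J_b|} )`.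
The distribution of the trailing variable slots `{1,…,n}` into the pairwise
disjoint sets `(J_b)_{b∈π}` is encoded by a function `f : Fin n → π`
(`J_b = f⁻¹(b)`); the genera `g_b ≤ g` satisfy `Σ_b g_b + k = g + |π|`;
factors `ω_{0,1}` (i.e. `g_b = 0`, `|b| = 1`, `J_b = ∅`) are excluded.
Within each factor the contracted slots (the elements of `b`, in increasing
order) come first, followed by the variable slots `J_b` in increasing order. -/
noncomputable def rhsBE (d r : ℕ) (K : (k : ℕ) → Fin d → (Fin k → Fin d) → ℂ)
    (ω : (g n : ℕ) → Tens d n) (g n : ℕ) : Tens d (n + 1) :=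
  fun w =>
    ∑ k ∈ Finset.Icc 2 r,
      ∑ j : Fin k → Fin d,
        K k (w 0) j *
          ∑ P : Finset (Finset (Fin k)),
            if IsSetPartition P then
              ∑ gb : {b // b ∈ P} → Fin (g + 1),
                ∑ f : Fin n → {b // b ∈ P},
                  if (∑ b : {b // b ∈ P}, (gb b : ℕ)) + k = g + P.card ∧
                      ∀ b : {b // b ∈ P},
                        ¬((gb b : ℕ) = 0 ∧ (b : Finset (Fin k)).card = 1 ∧
                          ∀ t, f t ≠ b) then
                    ∏ b : {b // b ∈ P},
                      ω (gb b)
                        ((b : Finset (Fin k)).card +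
                          (Finset.univ.filter fun t => f t = b).card)
                        (Fin.append
                          (fun s => j ((b : Finset (Fin k)).orderEmbOfFin rfl s))
                          (fun s => Fin.tail w
                            ((Finset.univ.filter fun t => f t = b).orderEmbOfFin
                              rfl s)))
                  else 0
            else 0

/-- `ω` is the family of amplitudes of the higher abstract
topological-recursion datum `(y, B, (K_k)_{2≤k≤r})`. -/
def SatisfiesBE (d r : ℕ) (y : Tens d 1) (B : Tens d 2)
    (K : (k : ℕ) → Fin d → (Fin k → Fin d) → ℂ)
    (ω : (g n : ℕ) → Tens d n) : Prop :=
  ω 0 1 = y ∧ ω 0 2 = B ∧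
    ∀ g n : ℕ, 1 < 2 * g + n → ω g (n + 1) = rhsBE d r K ω g n

lemma prod_zpow_eq (l : ℂ) (hl : l ≠ 0) {ι : Type*} (s : Finset ι) (e : ι → ℤ) :
    ∏ b ∈ s, l ^ (e b) = l ^ (∑ b ∈ s, e b) := by
  classical
  induction s using Finset.cons_induction with
  | empty => simp
  | cons a s ha ih => rw [Finset.prod_cons, Finset.sum_cons, zpow_add₀ hl, ih]

lemma sum_fiber_card {n : ℕ} {β : Type*} [Fintype β] [DecidableEq β] (f : Fin n → β) :
    ∑ b : β, (Finset.univ.filter fun t => f t = b).card = n := by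
  rw [← Finset.card_eq_sum_card_fiberwise (fun x _ => Finset.mem_univ (f x))]
  simp

lemma sum_card_blocks {k : ℕ} {P : Finset (Finset (Fin k))} (hP : IsSetPartition P) :
    ∑ b : {b // b ∈ P}, (b : Finset (Fin k)).card = k := by
  classical
  choose blk hblk using fun x => (hP.2 x).exists
  have huniq : ∀ (x : Fin k) (c : Finset (Fin k)), c ∈ P → x ∈ c → c = blk x :=
    fun x c hc hx => (hP.2 x).unique ⟨hc, hx⟩ (hblk x)
  set F : Fin k → {b // b ∈ P} := fun x => ⟨blk x, (hblk x).1⟩ with hF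
  have hfib : ∀ c : {b // b ∈ P},
      (Finset.univ.filter fun x => F x = c) = (c : Finset (Fin k)) := by
    intro c
    ext x
    simp only [Finset.mem_filter, Finset.mem_univ, true_and, hF]
    constructor
    · rintro rfl; exact (hblk x).2
    · intro hx; exact Subtype.ext ((huniq x c c.2 hx).symm)
  have := Finset.card_eq_sum_card_fiberwise
    (f := F) (s := Finset.univ) (t := Finset.univ) (fun x _ => Finset.mem_univ _)
  simp only [Finset.card_univ, Fintype.card_fin] at this
  exact (Finset.sum_congr rfl fun c _ => (congrArg Finset.card (hfib c)).symm).trans this.symm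


lemma inner_sum_scale (d : ℕ) (l : ℂ) (hl : l ≠ 0) (k : ℕ) (hk2 : 2 ≤ k)
    (g n : ℕ) (ω ωl : (g n : ℕ) → Tens d n)
    (IH : ∀ g' n' : ℕ, 1 ≤ n' → 2 * g' + n' ≤ 2 * g + n →
      ωl g' n' = fun i => l ^ (2 - 2 * (g' : ℤ) - (n' : ℤ)) * ω g' n' i)
    (j : Fin k → Fin d) (w : Fin (n + 1) → Fin d) :
    (∑ P : Finset (Finset (Fin k)),
      if IsSetPartition P then
        ∑ gb : {b // b ∈ P} → Fin (g + 1),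
          ∑ f : Fin n → {b // b ∈ P},
            if (∑ b : {b // b ∈ P}, (gb b : ℕ)) + k = g + P.card ∧
                ∀ b : {b // b ∈ P},
                  ¬((gb b : ℕ) = 0 ∧ (b : Finset (Fin k)).card = 1 ∧ ∀ t, f t ≠ b) then
              ∏ b : {b // b ∈ P},
                ωl (gb b)
                  ((b : Finset (Fin k)).card + (Finset.univ.filter fun t => f t = b).card)
                  (Fin.append (fun s => j ((b : Finset (Fin k)).orderEmbOfFin rfl s))
                    (fun s => Fin.tail w
                      ((Finset.univ.filter fun t => f t = b).orderEmbOfFin rfl s)))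
            else 0
      else 0)
    = l ^ ((k : ℤ) - 2 * g - n) *
      ∑ P : Finset (Finset (Fin k)),
        if IsSetPartition P then
          ∑ gb : {b // b ∈ P} → Fin (g + 1),
            ∑ f : Fin n → {b // b ∈ P},
              if (∑ b : {b // b ∈ P}, (gb b : ℕ)) + k = g + P.card ∧
                  ∀ b : {b // b ∈ P},
                    ¬((gb b : ℕ) = 0 ∧ (b : Finset (Fin k)).card = 1 ∧ ∀ t, f t ≠ b) then
                ∏ b : {b // b ∈ P},
                  ω (gb b)
                    ((b : Finset (Fin k)).card + (Finset.univ.filter fun t => f t = b).card)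
                    (Fin.append (fun s => j ((b : Finset (Fin k)).orderEmbOfFin rfl s))
                      (fun s => Fin.tail w
                        ((Finset.univ.filter fun t => f t = b).orderEmbOfFin rfl s)))
              else 0
          else 0 := by
  classical
  rw [Finset.mul_sum]
  refine Finset.sum_congr rfl fun P _ => ?_
  by_cases hP : IsSetPartition P
  · rw [if_pos hP, if_pos hP, Finset.mul_sum]
    refine Finset.sum_congr rfl fun gb _ => ?_
    rw [Finset.mul_sum]
    refine Finset.sum_congr rfl fun f _ => ?_
    by_cases hc : (∑ b : {b // b ∈ P}, (gb b : ℕ)) + k = g + P.card ∧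
        ∀ b : {b // b ∈ P},
          ¬((gb b : ℕ) = 0 ∧ (b : Finset (Fin k)).card = 1 ∧ ∀ t, f t ≠ b)
    · rw [if_pos hc, if_pos hc]
      obtain ⟨hc1, hc2⟩ := hc
      have hcards : ∑ b : {b // b ∈ P}, (b : Finset (Fin k)).card = k := sum_card_blocks hP
      have hfibs : ∑ b : {b // b ∈ P}, (Finset.univ.filter fun t => f t = b).card = n :=
        sum_fiber_card f
      have hune : ∀ b : {b // b ∈ P}, (b : Finset (Fin k)).Nonempty := fun b =>
        Finset.nonempty_of_ne_empty (fun h => hP.1 (h ▸ b.2))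
      have hpos : ∀ b : {b // b ∈ P},
          1 ≤ (b : Finset (Fin k)).card + (Finset.univ.filter fun t => f t = b).card := by
        intro b
        have := Finset.card_pos.mpr (hune b)
        omega
      have hT2 : ∀ b : {b // b ∈ P},
          2 ≤ 2 * (gb b : ℕ) +
            ((b : Finset (Fin k)).card + (Finset.univ.filter fun t => f t = b).card) := by
        intro b
        have hb1 : 1 ≤ (b : Finset (Fin k)).card := Finset.card_pos.mpr (hune b)
        by_cases hg0 : (gb b : ℕ) = 0
        · by_cases hcd : (b : Finset (Fin k)).card = 1
          · have hx := hc2 b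
            push_neg at hx
            obtain ⟨t, ht⟩ := hx hg0 hcd
            have : 0 < (Finset.univ.filter fun t => f t = b).card :=
              Finset.card_pos.mpr ⟨t, by simp [ht]⟩
            omega
          · omega
        · omega
      have hPcard : 1 ≤ P.card := by
        obtain ⟨b0, hb0⟩ := (hP.2 ⟨0, by omega⟩).exists
        exact Finset.card_pos.mpr ⟨b0, hb0.1⟩
      have htot : ∑ c : {b // b ∈ P}, (2 * (gb c : ℕ) +
            ((c : Finset (Fin k)).card + (Finset.univ.filter fun t => f t = c).card))
          = 2 * (∑ c : {b // b ∈ P}, (gb c : ℕ)) + (k + n) := by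
        rw [Finset.sum_add_distrib, Finset.sum_add_distrib, ← Finset.mul_sum, hcards, hfibs]
      have hle : ∀ b : {b // b ∈ P}, 2 * (gb b : ℕ) +
          ((b : Finset (Fin k)).card + (Finset.univ.filter fun t => f t = b).card)
          ≤ 2 * g + n := by
        intro b
        have hsplit : (2 * (gb b : ℕ) +
              ((b : Finset (Fin k)).card + (Finset.univ.filter fun t => f t = b).card)) +
              ∑ c ∈ Finset.univ.erase b, (2 * (gb c : ℕ) +
                ((c : Finset (Fin k)).card + (Finset.univ.filter fun t => f t = c).card))
            = ∑ c : {b // b ∈ P}, (2 * (gb c : ℕ) +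
                ((c : Finset (Fin k)).card + (Finset.univ.filter fun t => f t = c).card)) :=
          by
            exact Finset.add_sum_erase Finset.univ
              (fun c : {b // b ∈ P} => 2 * (gb c : ℕ) +
                ((c : Finset (Fin k)).card + (Finset.univ.filter fun t => f t = c).card))
              (Finset.mem_univ b)
        have hrest : (Finset.univ.erase b).card • 2 ≤
            ∑ c ∈ Finset.univ.erase b, (2 * (gb c : ℕ) +
              ((c : Finset (Fin k)).card + (Finset.univ.filter fun t => f t = c).card)) :=
          Finset.card_nsmul_le_sum _ _ _ (fun c _ => hT2 c)
        have hcrd : (Finset.univ.erase b).card = P.card - 1 := by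
          rw [Finset.card_erase_of_mem (Finset.mem_univ b), Finset.card_univ, Fintype.card_coe]
        rw [hcrd, smul_eq_mul] at hrest
        rw [htot] at hsplit
        omega
      have hexp : ∑ b : {b // b ∈ P}, (2 - 2 * ((gb b : ℕ) : ℤ) -
            (((b : Finset (Fin k)).card + (Finset.univ.filter fun t => f t = b).card : ℕ) : ℤ))
          = (k : ℤ) - 2 * g - n := by
        have h1' : (∑ b : {b // b ∈ P}, ((gb b : ℕ) : ℤ)) + (k : ℤ) = (g : ℤ) + P.card := by
          exact_mod_cast hc1
        have h2' : (∑ b : {b // b ∈ P}, (((b : Finset (Fin k)).card : ℕ) : ℤ)) = (k : ℤ) := by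
          exact_mod_cast hcards
        have h3' : (∑ b : {b // b ∈ P},
            (((Finset.univ.filter fun t => f t = b).card : ℕ) : ℤ)) = (n : ℤ) := by
          exact_mod_cast hfibs
        have h4 : (Finset.univ : Finset {b // b ∈ P}).card = P.card := by
          rw [Finset.card_univ, Fintype.card_coe]
        push_cast
        rw [Finset.sum_sub_distrib, Finset.sum_sub_distrib, Finset.sum_add_distrib,
          Finset.sum_const, ← Finset.mul_sum, h2', h3', h4, nsmul_eq_mul]
        linarith [h1']
      rw [Finset.prod_congr rfl (fun (b : {b // b ∈ P}) _ =>
        congrFun (IH ((gb b : ℕ))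
          ((b : Finset (Fin k)).card + (Finset.univ.filter fun t => f t = b).card)
          (hpos b) (by have := hle b; omega))
          (Fin.append (fun s => j ((b : Finset (Fin k)).orderEmbOfFin rfl s))
            (fun s => Fin.tail w
              ((Finset.univ.filter fun t => f t = b).orderEmbOfFin rfl s)))),
        Finset.prod_mul_distrib, prod_zpow_eq l hl, hexp]
    · rw [if_neg hc, if_neg hc, mul_zero]
  · rw [if_neg hP, if_neg hP, mul_zero]

/-- **Homogeneity of higher-order topological recursion**: rescaling
`y ↦ λ·y` and `K_k ↦ λ^{1-k}·K_k` rescales the amplitudes by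
`ω_{g,n} ↦ λ^{2-2g-n} ω_{g,n}` for all `g ≥ 0`, `n ≥ 1`. -/
theorem homogeneity_higher (d r : ℕ) (hr : 2 ≤ r)
    (y : Tens d 1) (B : Tens d 2)
    (K : (k : ℕ) → Fin d → (Fin k → Fin d) → ℂ)
    (l : ℂ) (hl : l ≠ 0)
    (ω ωl : (g n : ℕ) → Tens d n)
    (hω : SatisfiesBE d r y B K ω)
    (hωl : SatisfiesBE d r (fun i => l * y i) B
      (fun k i j => l ^ (1 - (k : ℤ)) * K k i j) ωl) :
    ∀ g n : ℕ, 1 ≤ n →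
      ωl g n = fun i => l ^ (2 - 2 * (g : ℤ) - (n : ℤ)) * ω g n i := by
  classical
  obtain ⟨hy, hB, hrec⟩ := hω
  obtain ⟨hy', hB', hrec'⟩ := hωl
  suffices H : ∀ m : ℕ, ∀ g n : ℕ, 2 * g + n = m → 1 ≤ n →
      ωl g n = fun i => l ^ (2 - 2 * (g : ℤ) - (n : ℤ)) * ω g n i by
    intro g n hn; exact H (2 * g + n) g n rfl hn
  intro m
  induction m using Nat.strong_induction_on with
  | _ m IH =>
    intro g n hm hn
    obtain ⟨n', rfl⟩ : ∃ n', n = n' + 1 := ⟨n - 1, by omega⟩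
    by_cases hlt : 1 < 2 * g + n'
    · rw [hrec' g n' hlt, hrec g n' hlt]
      funext w
      simp only [rhsBE]
      rw [Finset.mul_sum]
      refine Finset.sum_congr rfl fun k hk => ?_
      have hk2 : 2 ≤ k := (Finset.mem_Icc.mp hk).1
      rw [Finset.mul_sum]
      refine Finset.sum_congr rfl fun j _ => ?_
      rw [inner_sum_scale d l hl k hk2 g n' ω ωl
        (fun g'' n'' h1 h2 => IH (2 * g'' + n'') (by omega) g'' n'' rfl h1) j w]
      rw [show (2 - 2 * (g : ℤ) - ((n' + 1 : ℕ) : ℤ)) = (1 - (k : ℤ)) + ((k : ℤ) - 2 * g - n')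
        by push_cast; ring, zpow_add₀ hl]
      ring
    · have hg : g = 0 := by omega
      subst hg
      have hn1 : n' ≤ 1 := by omega
      interval_cases n'
      · funext i
        simp only [hy', hy]
        norm_num
      · funext i
        simp only [hB', hB]
        norm_num

end TRHigherHomogeneity
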